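/- Define λ(p,q) = q·(−1/24 − (p²+1)/(24q²)) + p/8 + p·s(p,q)/2 for coprime positive integers p, q. Then for any natural number r ≥ 1, λ(r²+1, r) = 0. -/

import Mathlib

/-- The sawtooth function `((x))`: zero on integers, else `x - ⌊x⌋ - 1/2`. -/
def saw (x : ℚ) : ℚ := if x = ⌊x⌋ then 0 else x - ⌊x⌋ - 1/2

/-- The Dedekind sum `s(p,q) = ∑_{i=1}^{|q|} ((i/q)) ((p i/q))`. -/
noncomputable def dedekindSum (p q : ℤ) : ℚ :=
  ∑ i ∈ Finset.Icc (1 : ℤ) |q|, saw ((i : ℚ) / (q : ℚ)) * saw ((p : ℚ) * (i : ℚ) / (q : ℚ))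

/-- Lescop's formula for the lens space `L(p,q)`. -/
noncomputable def lescopLens (p q : ℤ) : ℚ :=
  (q : ℚ) * (-1/24 - ((p : ℚ) ^ 2 + 1) / (24 * (q : ℚ) ^ 2)) + (p : ℚ) / 8 +
    (p : ℚ) * dedekindSum p q / 2

/-! Since `r² + 1 ≡ 1 (mod r)` and the Dedekind sum only depends on `p mod q`, the claim reduces
to the classical evaluation `s(1, q) = (q - 1)(q - 2) / (12 q)`, a sum of squares of
`i/q - 1/2`; substituting it into `λ(r² + 1, r)` everything cancels. -/

open Finset

lemma saw_add_intCast (x : ℚ) (n : ℤ) : saw (x + n) = saw x := by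
  simp only [saw, Int.floor_add_intCast, Int.cast_add, add_left_inj]
  split_ifs <;> ring

lemma saw_intCast (n : ℤ) : saw n = 0 := by
  simp [saw]

lemma saw_of_pos_of_lt_one {x : ℚ} (h0 : 0 < x) (h1 : x < 1) : saw x = x - 1 / 2 := by
  have hfloor : ⌊x⌋ = 0 := Int.floor_eq_zero_iff.mpr ⟨h0.le, h1⟩
  rw [saw, hfloor, Int.cast_zero, if_neg h0.ne', sub_zero]

lemma dedekindSum_add_mul_self (p k q : ℤ) : dedekindSum (p + k * q) q = dedekindSum p q := by
  refine sum_congr rfl fun i hi => ?_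
  have hq : (q : ℚ) ≠ 0 := by
    have : 0 < |q| := (mem_Icc.mp hi).1.trans (mem_Icc.mp hi).2
    exact_mod_cast abs_pos.mp this
  have hshift : ((p + k * q : ℤ) : ℚ) * i / q = p * i / q + ((k * i : ℤ) : ℚ) := by
    push_cast
    field_simp
  rw [hshift, saw_add_intCast]

lemma sum_range_succ_mul_sub_half_sq (c : ℚ) (m : ℕ) :
    ∑ j ∈ range m, ((j + 1) * c - 1 / 2) ^ 2 =
      c ^ 2 * m * (m + 1) * (2 * m + 1) / 6 - c * m * (m + 1) / 2 + m / 4 := by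
  induction m with
  | zero => simp
  | succ m ih =>
    rw [sum_range_succ, ih]
    push_cast
    ring

lemma dedekindSum_one_left (q : ℕ) :
    dedekindSum 1 q = ((q : ℚ) - 1) * (q - 2) / (12 * q) := by
  rcases q with _ | m
  · -- both sides vanish: the sum is empty and `x / 0 = 0`
    simp [dedekindSum]
  have hq : ((m + 1 : ℕ) : ℚ) ≠ 0 := by positivity
  have hterm : ∀ j ∈ range m,
      saw (((j + 1 : ℕ) : ℚ) / (m + 1 : ℕ)) ^ 2 = ((j + 1) * (1 / (m + 1 : ℕ)) - 1 / 2) ^ 2 := by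
    intro j hj
    have hj' : j + 1 < m + 1 := by simpa using hj
    rw [saw_of_pos_of_lt_one (by positivity)
      ((div_lt_one (by positivity)).mpr (by exact_mod_cast hj'))]
    push_cast
    ring
  have hsum : dedekindSum 1 (m + 1 : ℕ) =
      ∑ j ∈ range m, saw (((j + 1 : ℕ) : ℚ) / (m + 1 : ℕ)) ^ 2 := by
    rw [dedekindSum, abs_of_nonneg (by positivity), Int.Icc_eq_finset_map, sum_map]
    simp only [Function.Embedding.trans_apply, Nat.castEmbedding_apply, addLeftEmbedding_apply]
    rw [show ((m + 1 : ℕ) + 1 - 1 : ℤ).toNat = m + 1 by omega, sum_range_succ]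
    push_cast
    simp only [one_mul]
    rw [show (1 + m : ℚ) / (m + 1) = ((1 : ℤ) : ℚ) by field_simp; push_cast; ring,
      saw_intCast, mul_zero, add_zero]
    refine sum_congr rfl fun j _ => ?_
    rw [add_comm (1 : ℚ), sq]
  rw [hsum, sum_congr rfl hterm, sum_range_succ_mul_sub_half_sq]
  field_simp
  push_cast
  ring

theorem lescop_lens_r (r : ℕ) (hr : 1 ≤ r) :
    lescopLens ((r : ℤ) ^ 2 + 1) (r : ℤ) = 0 := by
  have hr0 : (r : ℚ) ≠ 0 := Nat.cast_ne_zero.mpr (by omega)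
  have hs : dedekindSum ((r : ℤ) ^ 2 + 1) r = ((r : ℚ) - 1) * (r - 2) / (12 * r) := by
    rw [show (r : ℤ) ^ 2 + 1 = 1 + r * r by ring, dedekindSum_add_mul_self, dedekindSum_one_left]
  rw [lescopLens, hs]
  push_cast
  field_simp
  ring
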